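/- Let a(j) = log₂ j if j = i + 2^{2^k} for some k ∈ ℕ and integer i with -k ≤ i ≤ k, and a(j) = 1 otherwise, and let b(j) = 2^{-j-1} Σ_{i=1}^{j} 2^i a(i). Then for all j ∈ ℕ: b(j) ≤ log₂ j whenever -k + 2^{2^k} ≤ j ≤ 2^{2^k} + 2k for some k ∈ ℕ, and b(j) ≤ 2 otherwise. -/

import Mathlib

open Real
open scoped Classical

noncomputable section

def sparse (j : ℤ) : Prop :=
  ∃ k : ℕ, 1 ≤ k ∧ ∃ i : ℤ, -(k:ℤ) ≤ i ∧ i ≤ (k:ℤ) ∧ j = i + 2 ^ (2 ^ k)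

/-- The sparse logarithmic weight `a(j)`. -/
noncomputable def aSeq (j : ℤ) : ℝ := if sparse j then Real.logb 2 (j:ℝ) else 1

/-- `b(j) = 2^{-j-1} Σ_{i=1}^{j} 2^i a(i)`. -/
noncomputable def bSeq (j : ℕ) : ℝ :=
  (2:ℝ) ^ (-(j:ℤ) - 1) * ∑ i ∈ Finset.Icc 1 j, (2:ℝ) ^ (i:ℕ) * aSeq (i:ℤ)

/-- `j` lies in one of the blocks `[-k + 2^(2^k), 2^(2^k) + 2k]`, `k ∈ ℕ`. -/
def inBlock (j : ℕ) : Prop :=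
  ∃ k : ℕ, 1 ≤ k ∧ -(k:ℤ) + 2 ^ (2 ^ k) ≤ (j:ℤ) ∧ (j:ℤ) ≤ 2 ^ (2 ^ k) + 2 * k

/-!
Since `b (j + 1) = (b j + a (j + 1)) / 2` and `b 0 = 0`, `b j` never exceeds `max_{i ≤ j} a i`,
which is at most `log₂ j` once `j ≥ 2`. For the bound `2`, let `m` be the last sparse index
up to `j`: every `a i` with `m < i ≤ j` is `1`, so `b j - 1 = (b m - 1) / 2 ^ (j - m)`. If `j` lies
outside every block, `m` sits in the sparse part of a block `k` while `j` is past its end, so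
`j - m ≥ k`, and `b m - 1 ≤ log₂ m - 1 ≤ 2 ^ k` because `m ≤ 2 ^ (2 ^ k + 1)`.
-/

lemma two_mul_add_two_le_two_pow_two_pow (k : ℕ) : 2 * k + 2 ≤ 2 ^ 2 ^ k :=
  calc 2 * k + 2 ≤ 2 * 2 ^ k := by have := k.lt_two_pow_self; omega
    _ = 2 ^ (k + 1) := by ring
    _ ≤ 2 ^ 2 ^ k := Nat.pow_le_pow_right two_pos k.lt_two_pow_self

lemma two_le_of_sparse {n : ℤ} (hn : sparse n) : 2 ≤ n := by
  obtain ⟨k, -, i, hki, -, rfl⟩ := hn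
  have : (2 * k + 2 : ℤ) ≤ 2 ^ 2 ^ k := by exact_mod_cast two_mul_add_two_le_two_pow_two_pow k
  linarith

lemma two_le_of_inBlock {j : ℕ} (hj : inBlock j) : 2 ≤ j := by
  obtain ⟨k, -, hkj, -⟩ := hj
  have : (2 * k + 2 : ℤ) ≤ 2 ^ 2 ^ k := by exact_mod_cast two_mul_add_two_le_two_pow_two_pow k
  omega

lemma aSeq_of_not_sparse {n : ℤ} (hn : ¬ sparse n) : aSeq n = 1 := if_neg hn

lemma aSeq_le_logb {i j : ℕ} (hi : 1 ≤ i) (hij : i ≤ j) (hj : 2 ≤ j) :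
    aSeq i ≤ logb 2 j := by
  unfold aSeq
  split_ifs
  · exact logb_le_logb_of_le one_lt_two (by exact_mod_cast hi) (by exact_mod_cast hij)
  · rw [le_logb_iff_rpow_le one_lt_two (by positivity), rpow_one]
    exact_mod_cast hj

lemma bSeq_zero : bSeq 0 = 0 := by simp [bSeq]

lemma bSeq_succ (j : ℕ) : bSeq (j + 1) = (bSeq j + aSeq ((j + 1 : ℕ) : ℤ)) / 2 := by
  simp only [bSeq, Finset.sum_Icc_succ_top (Nat.le_add_left 1 j)]
  have h : (2 : ℝ) ^ (-((j + 1 : ℕ) : ℤ) - 1) = (2 : ℝ) ^ (-(j : ℤ) - 1) / 2 := by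
    rw [div_eq_mul_inv, ← zpow_neg_one, ← zpow_add₀ two_ne_zero]
    push_cast; ring_nf
  have h' : (2 : ℝ) ^ (-(j : ℤ) - 1) * 2 ^ (j + 1) = 1 := by
    rw [← zpow_natCast, ← zpow_add₀ two_ne_zero]
    push_cast; ring_nf; simp
  rw [h]
  linear_combination aSeq ((j + 1 : ℕ) : ℤ) / 2 * h'

lemma bSeq_le_of_aSeq_le {M : ℝ} (hM : 0 ≤ M) {j : ℕ}
    (ha : ∀ i : ℕ, 1 ≤ i → i ≤ j → aSeq i ≤ M) : bSeq j ≤ M := by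
  induction j with
  | zero => rwa [bSeq_zero]
  | succ j ih =>
    rw [bSeq_succ]
    have hb := ih fun i hi hij => ha i hi (by omega)
    have hlast := ha (j + 1) (by omega) le_rfl
    linarith

lemma bSeq_le_logb_self {j : ℕ} (hj : 2 ≤ j) : bSeq j ≤ logb 2 j :=
  bSeq_le_of_aSeq_le (logb_nonneg one_lt_two (by exact_mod_cast (by omega : 1 ≤ j)))
    fun _ hi hij => aSeq_le_logb hi hij hj

lemma bSeq_add_sub_one (m n : ℕ) (ha : ∀ i : ℕ, m < i → i ≤ m + n → aSeq i = 1) :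
    bSeq (m + n) - 1 = (bSeq m - 1) / 2 ^ n := by
  induction n with
  | zero => simp
  | succ n ih =>
    rw [← add_assoc, bSeq_succ, ha (m + n + 1) (by omega) le_rfl, pow_succ,
      ← div_div, ← ih fun i hmi hin => ha i hmi (by omega)]
    ring

lemma bSeq_le_two_of_not_inBlock {j : ℕ} (hj : ¬ inBlock j) : bSeq j ≤ 2 := by
  set m := Nat.findGreatest (fun i : ℕ => sparse i) j
  have hmj : m ≤ j := Nat.findGreatest_le j
  have hdecay := bSeq_add_sub_one m (j - m) fun i hmi hij =>
    aSeq_of_not_sparse (Nat.findGreatest_is_greatest hmi (by omega))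
  rw [Nat.add_sub_cancel' hmj] at hdecay
  suffices bSeq m - 1 ≤ 2 ^ (j - m) by
    have := (div_le_one (by positivity)).2 this
    linarith
  rcases Nat.eq_zero_or_pos m with hm | hm
  · simp only [hm, bSeq_zero]
    linarith [pow_pos (two_pos (α := ℝ)) (j - 0)]
  have hsp : sparse m := Nat.findGreatest_of_ne_zero rfl hm.ne'
  obtain ⟨k, hk, i, hki, hik, hmi⟩ := id hsp
  have hkN : (2 * k + 2 : ℤ) ≤ 2 ^ 2 ^ k := by
    exact_mod_cast two_mul_add_two_le_two_pow_two_pow k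
  have hgap : k ≤ j - m := by
    by_contra! hlt
    have : (j : ℤ) < m + k := by omega
    exact hj ⟨k, hk, by omega, by linarith⟩
  have hlog : logb 2 m ≤ (2 ^ k + 1 : ℕ) := by
    rw [logb_le_iff_le_rpow one_lt_two (by exact_mod_cast hm), rpow_natCast]
    have : (m : ℤ) ≤ 2 ^ (2 ^ k + 1) := by rw [pow_succ]; linarith
    exact_mod_cast this
  calc bSeq m - 1 ≤ logb 2 m - 1 := by
        linarith [bSeq_le_logb_self (by exact_mod_cast two_le_of_sparse hsp : 2 ≤ m)]
    _ ≤ 2 ^ k := by push_cast at hlog; linarith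
    _ ≤ 2 ^ (j - m) := pow_le_pow_right₀ one_le_two hgap

theorem stmt4_general (j : ℕ) :
    (inBlock j → bSeq j ≤ Real.logb 2 (j:ℝ)) ∧ (¬ inBlock j → bSeq j ≤ 2) :=
  ⟨fun hj => bSeq_le_logb_self (two_le_of_inBlock hj), bSeq_le_two_of_not_inBlock⟩

/-- for all `j ∈ ℕ`: `b(j) ≤ log₂ j` whenever
`-k + 2^(2^k) ≤ j ≤ 2^(2^k) + 2k` for some `k ∈ ℕ`, and `b(j) ≤ 2` otherwise. -/
theorem stmt4 (j : ℕ) (hj : 1 ≤ j) :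
    (inBlock j → bSeq j ≤ Real.logb 2 (j:ℝ)) ∧ (¬ inBlock j → bSeq j ≤ 2) :=
  stmt4_general j
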